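/- arXiv:math/0206031 — 3 statements merged into one kernel-verified Lean document; each statement's English description precedes it below -/
import Mathlib

section
/- For any real number k ≥ 1 and any positive integers m, n, the k-th divisor function satisfies d_k(mn) ≤ d_k(m)·d_k(n), where d_k is the multiplicative function with d_k(p^a) = Γ(k+a)/(Γ(k)·a!) on prime powers. -/
/-!
Both sides are products over the primes dividing `mn` of the local factors
`f(e) = k(k+1)⋯(k+e-1)/e!`, and `f(a+b) ≤ f(a) f(b)` for each prime: passing from `f(a+b)` to
`f(a+b+1)` multiplies by `(k+a+b)/(a+b+1)`, which for `k ≥ 1` is at most the factor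
`(k+b)/(b+1)` taking `f(b)` to `f(b+1)`.
-/

/-- The `k`-th divisor function for real `k`, multiplicative with
`d_k(p^a) = Γ(k+a)/(Γ(k)·a!) = k(k+1)···(k+a-1)/a!`. -/
noncomputable def dReal (k : ℝ) (n : ℕ) : ℝ :=
  ∏ p ∈ n.factorization.support,
    (∏ j ∈ Finset.range (n.factorization p), (k + j)) / (Nat.factorial (n.factorization p))

/-- The value `d_k(p^e)`, independent of the prime `p`. -/
noncomputable def dRealPrimePow (k : ℝ) (e : ℕ) : ℝ :=
  (∏ j ∈ Finset.range e, (k + j)) / (Nat.factorial e)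

@[simp]
lemma dRealPrimePow_zero (k : ℝ) : dRealPrimePow k 0 = 1 := by
  simp [dRealPrimePow]

lemma dRealPrimePow_succ (k : ℝ) (e : ℕ) :
    dRealPrimePow k (e + 1) = dRealPrimePow k e * ((k + e) / (e + 1)) := by
  simp only [dRealPrimePow, Finset.prod_range_succ, Nat.factorial_succ, Nat.cast_mul]
  rw [div_mul_div_comm]
  push_cast
  ring

lemma dRealPrimePow_nonneg {k : ℝ} (hk : 0 ≤ k) (e : ℕ) : 0 ≤ dRealPrimePow k e :=
  div_nonneg (Finset.prod_nonneg fun _ _ => by positivity) (Nat.cast_nonneg _)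

lemma add_div_add_one_le_of_one_le {k : ℝ} (hk : 1 ≤ k) (a b : ℕ) :
    (k + (a + b)) / ((a + b : ℝ) + 1) ≤ (k + b) / (b + 1) := by
  rw [div_le_div_iff₀ (by positivity) (by positivity)]
  nlinarith [(Nat.cast_nonneg a : (0 : ℝ) ≤ a)]

lemma dRealPrimePow_add_le {k : ℝ} (hk : 1 ≤ k) (a b : ℕ) :
    dRealPrimePow k (a + b) ≤ dRealPrimePow k a * dRealPrimePow k b := by
  have hk₀ : 0 ≤ k := zero_le_one.trans hk
  induction b with
  | zero => simp
  | succ b ih =>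
    calc dRealPrimePow k (a + (b + 1))
        = dRealPrimePow k (a + b) * ((k + (a + b)) / ((a + b : ℝ) + 1)) := by
          rw [← add_assoc, dRealPrimePow_succ]; push_cast; ring_nf
      _ ≤ dRealPrimePow k a * dRealPrimePow k b * ((k + b) / (b + 1)) := by
          gcongr ?_ * ?_
          · exact mul_nonneg (dRealPrimePow_nonneg hk₀ a) (dRealPrimePow_nonneg hk₀ b)
          · exact add_div_add_one_le_of_one_le hk a b
      _ = dRealPrimePow k a * dRealPrimePow k (b + 1) := by
          rw [dRealPrimePow_succ, mul_assoc]

lemma dReal_eq_prod_of_support_subset (k : ℝ) {n : ℕ} {S : Finset ℕ}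
    (hS : n.factorization.support ⊆ S) :
    dReal k n = ∏ p ∈ S, dRealPrimePow k (n.factorization p) :=
  n.factorization.prod_of_support_subset hS (fun _ e => dRealPrimePow k e) fun _ _ =>
    dRealPrimePow_zero k

theorem stmt_0 (k : ℝ) (hk : 1 ≤ k) (m n : ℕ) (hm : 0 < m) (hn : 0 < n) :
    dReal k (m * n) ≤ dReal k m * dReal k n := by
  have hmn : (m * n).factorization = m.factorization + n.factorization :=
    Nat.factorization_mul hm.ne' hn.ne'
  have hsupp : (m * n).factorization.support ⊆
      m.factorization.support ∪ n.factorization.support :=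
    hmn ▸ Finsupp.support_add
  rw [dReal_eq_prod_of_support_subset k hsupp,
    dReal_eq_prod_of_support_subset k Finset.subset_union_left,
    dReal_eq_prod_of_support_subset k Finset.subset_union_right, ← Finset.prod_mul_distrib, hmn]
  exact Finset.prod_le_prod (fun _ _ => dRealPrimePow_nonneg (zero_le_one.trans hk) _)
    fun _ _ => dRealPrimePow_add_le hk _ _
end

section
/- For every positive integer k and every real number x ≥ 2, ∑_{n=1}^∞ (d_k(n)/n)·e^{-n/x} ≤ (e^{1/x} · ∑_{a=1}^∞ e^{-a/x}/a)^k, and this is at most (log 3x)^k. -/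
/-!
Write `w(n) = e^{-n/x}/n`. Since `ab ≥ a + b - 1` for `a, b ≥ 1`, the weight is submultiplicative
up to a constant: `w(ab) ≤ e^{1/x} w(a) w(b)`. As `d_{k+1}(n) = ∑_{d ∣ n} d_k(d)`, summing over
`n = ab` gives `∑ d_{k+1}(n) w(n) ≤ e^{1/x} (∑ d_k(n) w(n)) (∑ w(a))`, and induction on `k` gives
the first inequality. For the second, `∑ w(a) = -log(1 - e^{-1/x})`; with `t = 1/x ≤ 1/2`, the
bound `1 - e^{-t} ≥ t e^{-t/2}` (which is `sinh s ≥ s`) leaves a numerical estimate.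
-/

/-- The `k`-th divisor function for a natural number `k`: the number of ordered
`k`-tuples of positive integers with product `n`; multiplicative with
`d_k(p^a) = binom(k+a-1, a)`. -/
def dNat (k n : ℕ) : ℕ :=
  ∏ p ∈ n.factorization.support,
    Nat.choose (k + n.factorization p - 1) (n.factorization p)

open Finset
open scoped ENNReal

section DivisorFunction

open ArithmeticFunction
open scoped ArithmeticFunction.zeta

theorem zeta_pow_succ_apply_prime_pow {p : ℕ} (hp : p.Prime) (k a : ℕ) :
    ((ζ : ArithmeticFunction ℕ) ^ (k + 1)) (p ^ a) = (a + k).choose k := by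
  induction k generalizing a with
  | zero => simp [zeta_apply, hp.ne_zero]
  | succ k ih =>
    rw [pow_succ, mul_zeta_apply, Nat.sum_divisors_prime_pow hp]
    simp only [ih]
    rw [Nat.sum_range_add_choose, add_assoc]

theorem dNat_succ_eq_zeta_pow (k : ℕ) {n : ℕ} (hn : n ≠ 0) :
    dNat (k + 1) n = ((ζ : ArithmeticFunction ℕ) ^ (k + 1)) n := by
  rw [isMultiplicative_zeta.pow.multiplicative_factorization _ hn, dNat, Finsupp.prod]
  refine prod_congr rfl fun p hp => ?_
  rw [zeta_pow_succ_apply_prime_pow (Nat.prime_of_mem_primeFactors hp),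
    show k + 1 + n.factorization p - 1 = n.factorization p + k by omega, Nat.choose_symm_add]

theorem dNat_one (n : ℕ) : dNat 1 n = 1 := by
  simp [dNat]

theorem dNat_succ_succ (k : ℕ) {n : ℕ} (hn : n ≠ 0) :
    dNat (k + 2) n = ∑ d ∈ n.divisors, dNat (k + 1) d := by
  rw [dNat_succ_eq_zeta_pow _ hn, pow_succ, mul_zeta_apply]
  exact sum_congr rfl fun d hd => (dNat_succ_eq_zeta_pow k (Nat.pos_of_mem_divisors hd).ne').symm

end DivisorFunction

theorem ENNReal.tsum_pnat_sum_divisorsAntidiagonal (F : ℕ → ℕ → ℝ≥0∞) :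
    ∑' n : ℕ+, ∑ p ∈ (n : ℕ).divisorsAntidiagonal, F p.1 p.2 = ∑' (a : ℕ+) (b : ℕ+), F a b := by
  rw [← ENNReal.tsum_prod, ← sigmaAntidiagonalEquivProd.tsum_eq, ENNReal.tsum_sigma']
  refine tsum_congr fun n => ?_
  rw [← Finset.tsum_subtype]
  rfl

section SubmultiplicativeWeight

variable {w : ℕ → ℝ≥0∞} {c : ℝ≥0∞}

theorem ENNReal.tsum_pnat_sum_divisors_mul_le (f : ℕ → ℝ≥0∞)
    (hw : ∀ a b : ℕ+, w (a * b) ≤ c * w a * w b) :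
    ∑' n : ℕ+, (∑ d ∈ (n : ℕ).divisors, f d) * w n ≤
      c * (∑' n : ℕ+, f n * w n) * ∑' n : ℕ+, w n := by
  calc ∑' n : ℕ+, (∑ d ∈ (n : ℕ).divisors, f d) * w n
      = ∑' n : ℕ+, ∑ p ∈ (n : ℕ).divisorsAntidiagonal, f p.1 * w (p.1 * p.2) := by
        refine tsum_congr fun n => ?_
        rw [← Nat.sum_divisorsAntidiagonal (fun d _ => f d), sum_mul]
        exact sum_congr rfl fun p hp => by rw [(Nat.mem_divisorsAntidiagonal.1 hp).1]
    _ = ∑' (a : ℕ+) (b : ℕ+), f a * w (a * b) :=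
        ENNReal.tsum_pnat_sum_divisorsAntidiagonal fun a b => f a * w (a * b)
    _ ≤ ∑' (a : ℕ+) (b : ℕ+), c * (f a * w a) * w b :=
        ENNReal.tsum_le_tsum fun a => ENNReal.tsum_le_tsum fun b => by
          calc f a * w (a * b) ≤ f a * (c * w a * w b) := by gcongr; exact hw a b
            _ = c * (f a * w a) * w b := by ring
    _ = c * (∑' n : ℕ+, f n * w n) * ∑' n : ℕ+, w n := by
        simp only [ENNReal.tsum_mul_left, ENNReal.tsum_mul_right]

theorem tsum_pnat_dNat_mul_le (hw : ∀ a b : ℕ+, w (a * b) ≤ c * w a * w b) (k : ℕ) :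
    ∑' n : ℕ+, (dNat (k + 1) n : ℝ≥0∞) * w n ≤ c ^ k * (∑' n : ℕ+, w n) ^ (k + 1) := by
  induction k with
  | zero => simp [dNat_one]
  | succ k ih =>
    calc ∑' n : ℕ+, (dNat (k + 2) n : ℝ≥0∞) * w n
        = ∑' n : ℕ+, (∑ d ∈ (n : ℕ).divisors, (dNat (k + 1) d : ℝ≥0∞)) * w n := by
          simp only [dNat_succ_succ k (PNat.ne_zero _), Nat.cast_sum]
      _ ≤ c * (∑' n : ℕ+, (dNat (k + 1) n : ℝ≥0∞) * w n) * ∑' n : ℕ+, w n :=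
          ENNReal.tsum_pnat_sum_divisors_mul_le _ hw
      _ ≤ c * (c ^ k * (∑' n : ℕ+, w n) ^ (k + 1)) * ∑' n : ℕ+, w n := by gcongr
      _ = c ^ (k + 1) * (∑' n : ℕ+, w n) ^ (k + 2) := by ring

end SubmultiplicativeWeight

open Real

theorem exp_neg_mul_div_div_le {x a b : ℝ} (hx : 0 < x) (ha : 1 ≤ a) (hb : 1 ≤ b) :
    exp (-(a * b) / x) / (a * b) ≤ exp (1 / x) * (exp (-a / x) / a) * (exp (-b / x) / b) := by
  have hab : -(a * b) / x ≤ 1 / x + -a / x + -b / x := by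
    rw [← add_div, ← add_div]
    gcongr
    nlinarith [mul_nonneg (sub_nonneg.2 ha) (sub_nonneg.2 hb)]
  calc exp (-(a * b) / x) / (a * b) ≤ exp (1 / x + -a / x + -b / x) / (a * b) := by
        gcongr
    _ = exp (1 / x) * (exp (-a / x) / a) * (exp (-b / x) / b) := by
        rw [exp_add, exp_add]
        field_simp

theorem hasSum_exp_neg_div_div {x : ℝ} (hx : 0 < x) :
    HasSum (fun a : ℕ+ => exp (-(a : ℝ) / x) / a) (-log (1 - exp (-1 / x))) := by
  have hr : |exp (-1 / x)| < 1 := by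
    rw [abs_of_pos (exp_pos _), exp_lt_one_iff]
    exact div_neg_of_neg_of_pos (by norm_num) hx
  refine hasSum_pnat_iff_hasSum_succ (f := fun n : ℕ => exp (-(n : ℝ) / x) / n).2
    ((hasSum_pow_div_log_of_abs_lt_one hr).congr_fun fun n => ?_)
  rw [← exp_nat_mul]
  push_cast
  ring_nf

theorem mul_exp_neg_half_le_one_sub_exp_neg {t : ℝ} (ht : 0 ≤ t) :
    t * exp (-(t / 2)) ≤ 1 - exp (-t) := by
  have hsinh := self_le_sinh_iff.2 (by positivity : 0 ≤ t / 2)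
  rw [sinh_eq] at hsinh
  have hsq : exp (-t) = exp (-(t / 2)) * exp (-(t / 2)) := by rw [← exp_add]; ring_nf
  have hinv : exp (-(t / 2)) * exp (t / 2) = 1 := by rw [← exp_add]; simp
  nlinarith [exp_pos (-(t / 2))]

theorem neg_log_one_sub_exp_neg_le {t : ℝ} (ht : 0 < t) :
    -log (1 - exp (-t)) ≤ t / 2 - log t := by
  have h := log_le_log (by positivity) (mul_exp_neg_half_le_one_sub_exp_neg ht.le)
  rw [log_mul ht.ne' (exp_pos _).ne', log_exp] at h
  linarith

theorem exp_mul_neg_log_one_sub_exp_neg_le {t : ℝ} (ht0 : 0 < t) (ht : t ≤ 1 / 2) :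
    exp t * -log (1 - exp (-t)) ≤ log 3 - log t := by
  have hlog : 0 ≤ -log t := neg_nonneg.2 (log_nonpos ht0.le (by linarith))
  have hexp : exp t ≤ 1.65 := by
    have hhalf : exp (1 / 2) * exp (1 / 2) = exp 1 := by rw [← exp_add]; norm_num
    nlinarith [exp_le_exp.2 ht, exp_pos (1 / 2), exp_one_lt_d9]
  have hexp_sub : exp t - 1 ≤ t * exp t := by
    nlinarith [add_one_le_exp (-t), exp_pos t, exp_neg t, mul_inv_cancel₀ (exp_pos t).ne']
  have htlog : t * -log t ≤ 0.37 := by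
    have := mul_exp_neg_le_exp_neg_one (-log t)
    rw [neg_neg, exp_log ht0] at this
    linarith [exp_neg_one_lt_d9]
  calc exp t * -log (1 - exp (-t)) ≤ exp t * (t / 2 - log t) := by
        gcongr
        exact neg_log_one_sub_exp_neg_le ht0
    _ = -log t + (exp t - 1) * -log t + exp t * (t / 2) := by ring
    _ ≤ -log t + t * exp t * -log t + exp t * (t / 2) := by gcongr
    _ = -log t + exp t * (t * -log t + t / 2) := by ring
    _ ≤ -log t + 1.65 * (0.37 + 1 / 4) := by
        gcongr -log t + ?_
        exact mul_le_mul hexp (add_le_add htlog (by linarith))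
          (add_nonneg (mul_nonneg ht0.le hlog) (by linarith)) (by norm_num)
    _ ≤ log 3 - log t := by linarith [log_three_gt_d9]

theorem tsum_pnat_dNat_div_mul_exp_le (k : ℕ) {x : ℝ} (hx : 0 < x) :
    ∑' n : ℕ+, (dNat (k + 1) n : ℝ) / n * exp (-(n : ℝ) / x) ≤
      exp (1 / x) ^ k * (∑' a : ℕ+, exp (-(a : ℝ) / x) / a) ^ (k + 1) := by
  set A := ∑' a : ℕ+, exp (-(a : ℝ) / x) / a
  set w : ℕ → ℝ≥0∞ := fun n => ENNReal.ofReal (exp (-(n : ℝ) / x) / n)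
  have hw : ∀ a b : ℕ+, w (a * b) ≤ ENNReal.ofReal (exp (1 / x)) * w a * w b := by
    intro a b
    simp only [w, Nat.cast_mul]
    rw [← ENNReal.ofReal_mul (exp_pos _).le, ← ENNReal.ofReal_mul (by positivity)]
    exact ENNReal.ofReal_le_ofReal
      (exp_neg_mul_div_div_le hx (Nat.one_le_cast.2 a.pos) (Nat.one_le_cast.2 b.pos))
  have hsum : ∑' n : ℕ+, w n = ENNReal.ofReal A :=
    (ENNReal.ofReal_tsum_of_nonneg (fun _ => by positivity)
      (hasSum_exp_neg_div_div hx).summable).symm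
  have key : ∑' n : ℕ+, (dNat (k + 1) n : ℝ≥0∞) * w n ≤
      ENNReal.ofReal (exp (1 / x) ^ k * A ^ (k + 1)) := by
    rw [ENNReal.ofReal_mul (by positivity), ENNReal.ofReal_pow (exp_pos _).le,
      ENNReal.ofReal_pow (by positivity), ← hsum]
    exact tsum_pnat_dNat_mul_le hw k
  -- `tsum_toReal_eq` needs no summability: a divergent real series has `tsum` 0, like `∞.toReal`.
  calc ∑' n : ℕ+, (dNat (k + 1) n : ℝ) / n * exp (-(n : ℝ) / x)
      = (∑' n : ℕ+, (dNat (k + 1) n : ℝ≥0∞) * w n).toReal := by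
        rw [ENNReal.tsum_toReal_eq fun _ =>
          ENNReal.mul_ne_top (ENNReal.natCast_ne_top _) ENNReal.ofReal_ne_top]
        refine tsum_congr fun n => ?_
        simp only [ENNReal.toReal_mul, ENNReal.toReal_natCast,
          ENNReal.toReal_ofReal (by positivity : (0 : ℝ) ≤ exp (-(n : ℝ) / x) / n)]
        ring
    _ ≤ (ENNReal.ofReal (exp (1 / x) ^ k * A ^ (k + 1))).toReal :=
        ENNReal.toReal_mono ENNReal.ofReal_ne_top key
    _ = exp (1 / x) ^ k * A ^ (k + 1) := ENNReal.toReal_ofReal (by positivity)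

theorem stmt_5 (k : ℕ) (hk : 0 < k) (x : ℝ) (hx : 2 ≤ x) :
    (∑' n : ℕ+, (dNat k n : ℝ) / n * Real.exp (-(n : ℝ) / x)) ≤
      (Real.exp (1 / x) * ∑' a : ℕ+, Real.exp (-(a : ℝ) / x) / a) ^ k ∧
    (Real.exp (1 / x) * ∑' a : ℕ+, Real.exp (-(a : ℝ) / x) / a) ^ k ≤
      (Real.log (3 * x)) ^ k := by
  obtain ⟨k, rfl⟩ := Nat.exists_eq_add_one_of_ne_zero hk.ne'
  have hx0 : 0 < x := by linarith
  set A := ∑' a : ℕ+, exp (-(a : ℝ) / x) / a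
  have hA : A = -log (1 - exp (-(1 / x))) := by
    rw [← neg_div]
    exact (hasSum_exp_neg_div_div hx0).tsum_eq
  have hA0 : 0 ≤ exp (1 / x) * A := by positivity
  have hbound : exp (1 / x) * A ≤ log (3 * x) := by
    have h := exp_mul_neg_log_one_sub_exp_neg_le (one_div_pos.2 hx0) (by gcongr)
    rwa [← hA, one_div, log_inv, sub_neg_eq_add, ← log_mul (by norm_num) hx0.ne', ← one_div] at h
  refine ⟨?_, pow_le_pow_left₀ hA0 hbound _⟩
  calc _ ≤ exp (1 / x) ^ k * A ^ (k + 1) := tsum_pnat_dNat_div_mul_exp_le k hx0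
    _ ≤ exp (1 / x) ^ (k + 1) * A ^ (k + 1) := by
        gcongr
        · exact one_le_exp (by positivity)
        · omega
    _ = (exp (1 / x) * A) ^ (k + 1) := (mul_pow _ _ _).symm
end

section
/- Let r_1, r_2, r_3 be positive real numbers and θ_2, θ_3 real numbers. Then |r_1 + r_2·e^{iθ_2} + r_3·e^{iθ_3}|² ≤ (r_1+r_2+r_3)² − 2·r_1·r_3·(1 − cos θ_3), and consequently |r_1 + r_2·e^{iθ_2} + r_3·e^{iθ_3}| ≤ (r_1+r_2+r_3) · exp(−r_1·r_3·(1−cos θ_3)/(r_1+r_2+r_3)²). -/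
/-! Put `w = r₁ + r₃ e^{iθ₃}`. By the law of cosines `‖w‖² = (r₁ + r₃)² − 2 r₁ r₃ (1 − cos θ₃)`,
and the triangle inequality `‖w + r₂ e^{iθ₂}‖ ≤ ‖w‖ + r₂` with `‖w‖ ≤ r₁ + r₃` gives the bound on
the square. Writing `S = r₁ + r₂ + r₃` and `A = r₁ r₃ (1 − cos θ₃)`, the exponential bound follows
from `S² − 2A = S² (1 − 2A/S²) ≤ S² e^{−2A/S²}` by taking square roots. -/

open Complex

theorem Complex.sq_norm_ofReal_add_mul_exp_mul_I (a c θ : ℝ) :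
    ‖(a : ℂ) + c * exp (θ * I)‖ ^ 2 = a ^ 2 + c ^ 2 + 2 * a * c * Real.cos θ := by
  rw [Complex.sq_norm, normSq_apply]
  simp only [exp_mul_I, add_re, add_im, mul_re, mul_im, ofReal_re, ofReal_im, I_re, I_im,
    ← ofReal_cos, ← ofReal_sin]
  linear_combination c ^ 2 * Real.cos_sq_add_sin_sq θ

theorem Complex.sq_norm_add_mul_exp_add_mul_exp_le {a b c : ℝ} (ha : 0 ≤ a) (hb : 0 ≤ b)
    (hc : 0 ≤ c) (φ θ : ℝ) :
    ‖(a : ℂ) + b * exp (φ * I) + c * exp (θ * I)‖ ^ 2 ≤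
      (a + b + c) ^ 2 - 2 * a * c * (1 - Real.cos θ) := by
  set w : ℂ := a + c * exp (θ * I)
  have norm_mul_exp (r : ℝ) (hr : 0 ≤ r) (t : ℝ) : ‖(r : ℂ) * exp (t * I)‖ = r := by
    rw [norm_mul, norm_exp_ofReal_mul_I, mul_one, norm_real, Real.norm_of_nonneg hr]
  have hw : ‖w‖ ≤ a + c := (norm_add_le _ _).trans_eq <| by
    rw [norm_mul_exp c hc, norm_real, Real.norm_of_nonneg ha]
  have hz : ‖(a : ℂ) + b * exp (φ * I) + c * exp (θ * I)‖ ≤ ‖w‖ + b := by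
    rw [add_right_comm]
    exact (norm_add_le _ _).trans_eq <| by rw [norm_mul_exp b hb φ]
  calc ‖(a : ℂ) + b * exp (φ * I) + c * exp (θ * I)‖ ^ 2
      ≤ (‖w‖ + b) ^ 2 := pow_le_pow_left₀ (norm_nonneg _) hz 2
    _ = ‖w‖ ^ 2 + 2 * b * ‖w‖ + b ^ 2 := by ring
    _ ≤ (a + b + c) ^ 2 - 2 * a * c * (1 - Real.cos θ) := by
      rw [sq_norm_ofReal_add_mul_exp_mul_I]
      nlinarith [mul_le_mul_of_nonneg_left hw hb]

theorem Real.le_mul_exp_neg_div_sq_of_sq_le_sq_sub {x S A : ℝ} (hS : 0 < S)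
    (hx : x ^ 2 ≤ S ^ 2 - 2 * A) : x ≤ S * Real.exp (-A / S ^ 2) := by
  refine le_of_pow_le_pow_left₀ two_ne_zero (by positivity) ?_
  calc x ^ 2 ≤ S ^ 2 - 2 * A := hx
    _ = S ^ 2 * (1 - 2 * A / S ^ 2) := by field_simp
    _ ≤ S ^ 2 * Real.exp (-(2 * A / S ^ 2)) := by gcongr; exact Real.one_sub_le_exp_neg _
    _ = (S * Real.exp (-A / S ^ 2)) ^ 2 := by
      rw [mul_pow, ← Real.exp_nat_mul]
      ring_nf

theorem stmt_6 (r1 r2 r3 θ2 θ3 : ℝ) (h1 : 0 < r1) (h2 : 0 < r2) (h3 : 0 < r3) :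
    ‖(r1 : ℂ) + r2 * Complex.exp (θ2 * Complex.I) +
        r3 * Complex.exp (θ3 * Complex.I)‖ ^ 2 ≤
      (r1 + r2 + r3) ^ 2 - 2 * r1 * r3 * (1 - Real.cos θ3) ∧
    ‖(r1 : ℂ) + r2 * Complex.exp (θ2 * Complex.I) +
        r3 * Complex.exp (θ3 * Complex.I)‖ ≤
      (r1 + r2 + r3) * Real.exp (-(r1 * r3 * (1 - Real.cos θ3)) / (r1 + r2 + r3) ^ 2) := by
  have hsq := sq_norm_add_mul_exp_add_mul_exp_le h1.le h2.le h3.le θ2 θ3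
  exact ⟨hsq, Real.le_mul_exp_neg_div_sq_of_sq_le_sq_sub (by positivity) (by linarith)⟩
end
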